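/- arXiv:1204.0323 — 3 statements merged into one kernel-verified Lean document; each statement's English description precedes it below -/
import Mathlib

section
/- For a stationary strategy y, the following are equivalent: (C1) U¹(μ₀,y) ≥ U¹(μ,y) for every copula μ ∈ M(m); (C'1) for every permutation φ of S, Σ_{s∈S} u¹(s, y(·|s)) ≥ Σ_{s∈S} u¹(s, y(·|φ(s))), where u¹(s, y(·|a)) = Σ_{b∈B} y(b|a) u¹(s,b). -/
/-- `μ` is a probability distribution on `S × S` whose two marginals both equal `m`. -/
def IsCopula {S : Type*} [Fintype S] (m : S → ℝ) (μ : S × S → ℝ) : Prop :=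
  (∀ q, 0 ≤ μ q) ∧ (∑ q : S × S, μ q = 1) ∧
    (∀ s, ∑ a, μ (s, a) = m s) ∧ (∀ a, ∑ s, μ (s, a) = m a)

/-- The diagonal copula `μ₀`. -/
def mu0 {S : Type*} [DecidableEq S] (m : S → ℝ) : S × S → ℝ :=
  fun q => if q.1 = q.2 then m q.1 else 0

/-- `y` is a stationary strategy: each `y a` is a probability distribution on `B`. -/
def IsStrategy {S B : Type*} [Fintype B] (y : S → B → ℝ) : Prop :=
  (∀ a b, 0 ≤ y a b) ∧ ∀ a, ∑ b, y a b = 1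

/-- `U(μ, y) = Σ_{(s,a)} μ(s,a) Σ_b y(b|a) u(s,b)`. -/
def Upay {S B : Type*} [Fintype S] [Fintype B]
    (u : S × B → ℝ) (μ : S × S → ℝ) (y : S → B → ℝ) : ℝ :=
  ∑ s, ∑ a, μ (s, a) * ∑ b, y a b * u (s, b)

/-!
Write `f s a = u¹(s, y(·|a))`. Shifting mass `ε = min m` from the diagonal of `μ₀` onto the graph
of `φ` gives a copula whose payoff exceeds that of `μ₀` by `ε (Σ f(s, φ s) - Σ f(s, s))`, so (C1)
implies (C'1). Conversely, the only property of a copula `μ` that matters is that it is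
nonnegative with equal row and column sums. Then every off-diagonal entry of `μ` lies on a cycle
of positive off-diagonal entries; moving the smallest mass on such a cycle `c` back to the diagonal
keeps the sums, empties an off-diagonal entry and, by (C'1) applied to `c`, does not decrease the
payoff. After finitely many steps `μ` has become diagonal, i.e. equal to `μ₀`.
-/

open Finset Function

theorem Function.exists_iterate_mem_periodicPts {α : Type*} [Finite α] (f : α → α) (x : α) :
    ∃ n, f^[n] x ∈ periodicPts f := by
  obtain ⟨m, n, hmn, heq⟩ := Finite.exists_ne_map_eq_of_infinite (fun n => f^[n] x)
  wlog hlt : m < n generalizing m n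
  · exact this n m hmn.symm heq.symm (by omega)
  refine ⟨m, mk_mem_periodicPts (n := n - m) (by omega) ?_⟩
  change f^[n - m] (f^[m] x) = f^[m] x
  rw [← iterate_add_apply, Nat.sub_add_cancel hlt.le]
  exact heq.symm

theorem exists_perm_ne_along_rel {α : Type*} [Finite α] (r : α → α → Prop) (T : α → Prop)
    (hT : ∀ s, T s → ∃ a, a ≠ s ∧ r s a ∧ T a) {x : α} (hx : T x) :
    ∃ c : Equiv.Perm α, (∃ s, c s ≠ s) ∧ ∀ s, c s ≠ s → r s (c s) := by
  classical
  have hstep : ∀ s, ∃ a, (a ≠ s → r s a) ∧ (T s → a ≠ s ∧ T a) := by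
    intro s
    by_cases hs : T s
    · obtain ⟨a, has, hr, ha⟩ := hT s hs
      exact ⟨a, fun _ => hr, fun _ => ⟨has, ha⟩⟩
    · exact ⟨s, fun h => absurd rfl h, fun h => absurd h hs⟩
  choose f hfr hfT using hstep
  have hiter : ∀ n, T (f^[n] x) := by
    intro n
    induction n with
    | zero => exact hx
    | succ n ih => rw [iterate_succ_apply']; exact (hfT _ ih).2
  obtain ⟨n, hn⟩ := exists_iterate_mem_periodicPts f x
  -- `f` permutes its periodic points; `c` follows `f` there and fixes everything else.
  let c : Equiv.Perm α := Equiv.Perm.ofSubtype ((bijOn_periodicPts f).equiv f)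
  have hc : ∀ s, c s ≠ s → c s = f s := by
    intro s hs
    by_cases hp : s ∈ periodicPts f
    · exact Equiv.Perm.ofSubtype_apply_of_mem _ hp
    · exact absurd (Equiv.Perm.ofSubtype_apply_of_not_mem _ hp) hs
  refine ⟨c, ⟨f^[n] x, ?_⟩, fun s hs => ?_⟩
  · rw [Equiv.Perm.ofSubtype_apply_of_mem _ hn]
    exact (hfT _ (hiter n)).1
  · have hcs := hc s hs
    rw [hcs] at hs ⊢
    exact hfr s hs

section Rerouting

variable {S : Type*} [Fintype S] [DecidableEq S]

def permGraph (c : Equiv.Perm S) (q : S × S) : ℝ :=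
  if q.2 = c q.1 then 1 else 0

def reroute (ν : S × S → ℝ) (c : Equiv.Perm S) (δ : ℝ) (q : S × S) : ℝ :=
  ν q + δ * (permGraph c q - permGraph 1 q)

noncomputable def offDiagSupport (ν : S × S → ℝ) : Finset (S × S) :=
  univ.filter fun q => q.1 ≠ q.2 ∧ 0 < ν q

theorem sum_permGraph_left (c : Equiv.Perm S) (s : S) : ∑ a, permGraph c (s, a) = 1 := by
  simp [permGraph]

theorem sum_permGraph_right (c : Equiv.Perm S) (a : S) : ∑ s, permGraph c (s, a) = 1 := by
  simp [permGraph, ← Equiv.symm_apply_eq]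

theorem sum_permGraph_mul (c : Equiv.Perm S) (f : S → S → ℝ) (s : S) :
    ∑ a, permGraph c (s, a) * f s a = f s (c s) := by
  simp [permGraph]

variable {ν : S × S → ℝ} {c : Equiv.Perm S} {δ : ℝ}

theorem sum_reroute_left (s : S) : ∑ a, reroute ν c δ (s, a) = ∑ a, ν (s, a) := by
  simp [reroute, sum_add_distrib, mul_sub, sum_sub_distrib, ← mul_sum, sum_permGraph_left]

theorem sum_reroute_right (a : S) : ∑ s, reroute ν c δ (s, a) = ∑ s, ν (s, a) := by
  simp [reroute, sum_add_distrib, mul_sub, sum_sub_distrib, ← mul_sum, sum_permGraph_right]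

theorem sum_reroute_mul (f : S → S → ℝ) :
    ∑ s, ∑ a, reroute ν c δ (s, a) * f s a =
      ∑ s, ∑ a, ν (s, a) * f s a + δ * (∑ s, f s (c s) - ∑ s, f s s) := by
  have hrow : ∀ s, ∑ a, reroute ν c δ (s, a) * f s a =
      ∑ a, ν (s, a) * f s a + δ * (f s (c s) - f s s) := by
    intro s
    simp only [reroute, add_mul, mul_assoc, sub_mul, mul_sub, sum_add_distrib, sum_sub_distrib,
      ← mul_sum, sum_permGraph_mul, Equiv.Perm.coe_one, id]
  simp only [hrow, sum_add_distrib, ← mul_sum, sum_sub_distrib]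

theorem exists_reroute_offDiagSupport_card_lt (hν : ∀ q, 0 ≤ ν q) (hc : ∃ s, c s ≠ s)
    (hcν : ∀ s, c s ≠ s → 0 < ν (s, c s)) :
    ∃ δ > 0, (∀ q, 0 ≤ reroute ν c (-δ) q) ∧
      #(offDiagSupport (reroute ν c (-δ))) < #(offDiagSupport ν) := by
  obtain ⟨s₁, hs₁, hmin⟩ := exists_min_image (univ.filter fun s => c s ≠ s)
    (fun s => ν (s, c s)) (by simpa [filter_nonempty_iff] using hc)
  simp only [mem_filter, mem_univ, true_and] at hs₁ hmin
  refine ⟨ν (s₁, c s₁), hcν s₁ hs₁, ?_, ?_⟩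
  · rintro ⟨s, a⟩
    have := hν (s, a)
    simp only [reroute, permGraph, Equiv.Perm.coe_one, id]
    by_cases ha : a = c s
    · by_cases hs : c s = s
      · simpa [ha, hs] using this
      · have := hmin s hs
        simp only [ha, hs, if_true, if_false, sub_zero, mul_one]
        linarith
    · by_cases has : a = s
      · subst has
        simp only [ha, if_true, if_false, zero_sub, mul_neg, mul_one, neg_neg]
        linarith [hcν s₁ hs₁]
      · simp [ha, has, this]
  · apply card_lt_card
    rw [ssubset_iff_of_subset]
    · refine ⟨(s₁, c s₁), ?_, ?_⟩
      · simp [offDiagSupport, Ne.symm hs₁, hcν s₁ hs₁]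
      · simp [offDiagSupport, reroute, permGraph, hs₁]
    · intro q hq
      simp only [offDiagSupport, mem_filter, mem_univ, true_and] at hq ⊢
      refine ⟨hq.1, hq.2.trans_le ?_⟩
      simp only [reroute, permGraph, Equiv.Perm.coe_one, id_eq, Ne.symm hq.1, if_false, sub_zero,
        add_le_iff_nonpos_right]
      split_ifs <;> linarith [hcν s₁ hs₁]

theorem sum_mul_eq_sum_diag_of_offDiagSupport_eq_empty (hν : ∀ q, 0 ≤ ν q)
    (h : offDiagSupport ν = ∅) (f : S → S → ℝ) :
    ∑ s, ∑ a, ν (s, a) * f s a = ∑ s, (∑ a, ν (s, a)) * f s s := by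
  have hzero : ∀ s a, a ≠ s → ν (s, a) = 0 := by
    intro s a has
    have : (s, a) ∉ offDiagSupport ν := by simp [h]
    simp only [offDiagSupport, mem_filter, mem_univ, true_and, not_and, not_lt] at this
    exact (this (Ne.symm has)).antisymm (hν _)
  refine sum_congr rfl fun s _ => ?_
  rw [sum_eq_single s (fun a _ has => by rw [hzero s a has, zero_mul]) (by simp),
    sum_eq_single s (fun a _ has => hzero s a has) (by simp)]

theorem exists_out_edge_of_in_edge (hν : ∀ q, 0 ≤ ν q)
    (hbal : ∀ s, ∑ a, ν (s, a) = ∑ a, ν (a, s)) {t s : S} (hts : t ≠ s) (hpos : 0 < ν (t, s)) :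
    ∃ a, a ≠ s ∧ 0 < ν (s, a) := by
  by_contra! hout
  have hrow : ∑ a, ν (s, a) = ν (s, s) :=
    sum_eq_single s (fun a _ has => (hout a has).antisymm (hν _)) (by simp)
  have hcol : ν (s, s) + ν (t, s) ≤ ∑ a, ν (a, s) := by
    rw [← sum_pair (f := fun a => ν (a, s)) hts.symm]
    exact sum_le_sum_of_subset_of_nonneg (subset_univ _) fun a _ _ => hν _
  linarith [hbal s]

theorem sum_mul_le_sum_diag_of_balanced (f : S → S → ℝ)
    (hf : ∀ c : Equiv.Perm S, ∑ s, f s (c s) ≤ ∑ s, f s s) (hν : ∀ q, 0 ≤ ν q)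
    (hbal : ∀ s, ∑ a, ν (s, a) = ∑ a, ν (a, s)) :
    ∑ s, ∑ a, ν (s, a) * f s a ≤ ∑ s, (∑ a, ν (s, a)) * f s s := by
  induction hn : #(offDiagSupport ν) using Nat.strong_induction_on generalizing ν with
  | _ n ih =>
  obtain hempty | ⟨⟨t, s⟩, hts⟩ := (offDiagSupport ν).eq_empty_or_nonempty
  · exact (sum_mul_eq_sum_diag_of_offDiagSupport_eq_empty hν hempty f).le
  simp only [offDiagSupport, mem_filter, mem_univ, true_and] at hts
  obtain ⟨c, hc, hcν⟩ := exists_perm_ne_along_rel (fun s a => 0 < ν (s, a))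
    (fun s => ∃ t, t ≠ s ∧ 0 < ν (t, s))
    (fun s ⟨t, hts, hpos⟩ => (exists_out_edge_of_in_edge hν hbal hts hpos).imp
      fun a ⟨has, hsa⟩ => ⟨has, hsa, s, has.symm, hsa⟩) ⟨t, hts.1, hts.2⟩
  obtain ⟨δ, hδ, hν', hlt⟩ := exists_reroute_offDiagSupport_card_lt hν hc hcν
  have hbal' : ∀ s, ∑ a, reroute ν c (-δ) (s, a) = ∑ a, reroute ν c (-δ) (a, s) := by
    simpa only [sum_reroute_left, sum_reroute_right] using hbal
  have key := ih _ (hn ▸ hlt) hν' hbal' rfl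
  rw [sum_reroute_mul] at key
  simp only [sum_reroute_left] at key
  have hgain : 0 ≤ δ * (∑ s, f s s - ∑ s, f s (c s)) := mul_nonneg hδ.le (sub_nonneg.2 (hf c))
  linarith

end Rerouting

section Copula

variable {S : Type*} [Fintype S] [DecidableEq S]

theorem sum_mu0_left (m : S → ℝ) (s : S) : ∑ a, mu0 m (s, a) = m s := by
  simp [mu0]

theorem sum_mu0_right (m : S → ℝ) (a : S) : ∑ s, mu0 m (s, a) = m a := by
  simp [mu0]

theorem sum_mu0_mul (m : S → ℝ) (f : S → S → ℝ) :
    ∑ s, ∑ a, mu0 m (s, a) * f s a = ∑ s, m s * f s s := by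
  simp [mu0, ite_mul]

theorem IsCopula.sum_mul_le_sum_mu0_mul {m : S → ℝ} {μ : S × S → ℝ} (hμ : IsCopula m μ) (f : S → S → ℝ)
    (hf : ∀ c : Equiv.Perm S, ∑ s, f s (c s) ≤ ∑ s, f s s) :
    ∑ s, ∑ a, μ (s, a) * f s a ≤ ∑ s, m s * f s s := by
  obtain ⟨hnonneg, -, hrow, hcol⟩ := hμ
  simpa only [hrow] using
    sum_mul_le_sum_diag_of_balanced f hf hnonneg fun s => (hrow s).trans (hcol s).symm

theorem isCopula_reroute_mu0 {m : S → ℝ} (hm1 : ∑ s, m s = 1) (c : Equiv.Perm S) {ε : ℝ} (hε : 0 ≤ ε)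
    (hεm : ∀ s, ε ≤ m s) : IsCopula m (reroute (mu0 m) c ε) := by
  refine ⟨?_, ?_, fun s => (sum_reroute_left s).trans (sum_mu0_left m s),
    fun a => (sum_reroute_right a).trans (sum_mu0_right m a)⟩
  · rintro ⟨s, a⟩
    simp only [reroute, mu0, permGraph, Equiv.Perm.coe_one, id]
    rcases eq_or_ne s a with rfl | hsa
    · have := hεm s
      simp only [if_true]
      split_ifs <;> linarith
    · simp only [hsa, hsa.symm, if_false, sub_zero, zero_add]
      split_ifs <;> linarith
  · rw [Fintype.sum_prod_type]
    simp only [sum_reroute_left, sum_mu0_left, hm1]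

theorem sum_le_sum_diag_of_forall_isCopula {m : S → ℝ} (hm : ∀ s, 0 < m s) (hm1 : ∑ s, m s = 1)
    (f : S → S → ℝ) (h : ∀ μ, IsCopula m μ → ∑ s, ∑ a, μ (s, a) * f s a ≤ ∑ s, m s * f s s)
    (c : Equiv.Perm S) : ∑ s, f s (c s) ≤ ∑ s, f s s := by
  have : Nonempty S := by
    by_contra hS
    simp [not_nonempty_iff.mp hS] at hm1
  obtain ⟨s₀, hs₀⟩ := Finite.exists_min m
  have key := h _ (isCopula_reroute_mu0 hm1 c (hm s₀).le hs₀)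
  rw [sum_reroute_mul, sum_mu0_mul] at key
  have hloss : m s₀ * (∑ s, f s (c s) - ∑ s, f s s) ≤ 0 := by linarith
  exact sub_nonpos.1 (nonpos_of_mul_nonpos_right hloss (hm s₀))

end Copula

theorem stmt1_general {S B : Type*} [Fintype S] [DecidableEq S]
    [Fintype B]
    (m : S → ℝ) (hm : ∀ s, 0 < m s) (hm1 : ∑ s, m s = 1)
    (u1 : S × B → ℝ) (y : S → B → ℝ) :
    (∀ μ : S × S → ℝ, IsCopula m μ → Upay u1 (mu0 m) y ≥ Upay u1 μ y) ↔
      (∀ φ : Equiv.Perm S,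
        ∑ s, ∑ b, y s b * u1 (s, b) ≥ ∑ s, ∑ b, y (φ s) b * u1 (s, b)) := by
  set f : S → S → ℝ := fun s a => ∑ b, y a b * u1 (s, b)
  have hU : ∀ μ, Upay u1 μ y = ∑ s, ∑ a, μ (s, a) * f s a := fun _ => rfl
  simp only [ge_iff_le, hU, sum_mu0_mul]
  exact ⟨fun h φ => sum_le_sum_diag_of_forall_isCopula hm hm1 f h φ,
    fun h μ hμ => hμ.sum_mul_le_sum_mu0_mul f h⟩

theorem stmt1 {S B : Type*} [Fintype S] [DecidableEq S] [Nonempty S]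
    [Fintype B] [Nonempty B]
    (m : S → ℝ) (hm : ∀ s, 0 < m s) (hm1 : ∑ s, m s = 1)
    (u1 : S × B → ℝ) (y : S → B → ℝ) (hy : IsStrategy y) :
    (∀ μ : S × S → ℝ, IsCopula m μ → Upay u1 (mu0 m) y ≥ Upay u1 μ y) ↔
      (∀ φ : Equiv.Perm S,
        ∑ s, ∑ b, y s b * u1 (s, b) ≥ ∑ s, ∑ b, y (φ s) b * u1 (s, b)) :=
  stmt1_general m hm hm1 u1 y
end

section
/- Suppose condition B fails for the game G = (u¹,u²): every stationary strategy y satisfying U²(μ₀,y) ≥ v² and U¹(μ₀,y) ≥ U¹(μ,y) for all μ ∈ M(m) is constant (y(·|s) is the same distribution for all s). Then there exists ε > 0 such that condition B fails for every game G' = (ũ¹,ũ²) with ‖ũ¹ − u¹‖ < ε and ‖ũ² − u²‖ < ε, where in G' the conditions are formulated with Ũ¹, Ũ², ṽ² defined from ũ¹, ũ² as U¹, U², v² are from u¹, u². -/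
/-!
Condition B is a closed condition on the game, so its failure is an open one. For a
state-independent `y`, `U(μ, y)` is the same for every `μ` with first marginal `m`, so
admissibility only sees `y` modulo state-independent profiles. Shifting the mass that all
states put on an action onto a maximiser `b` of player 2's mean payoff turns a nonconstant
admissible strategy into a nonzero direction `d` at the pure strategy `b` satisfying closed,
positively homogeneous conditions; conversely `δ_b + d` is admissible and nonconstant when
`‖d‖ = 1`. The games satisfying condition B are therefore a finite union of projections of
closed sets along the compact unit sphere.
-/

open Metric

section

variable {S B : Type*} [Fintype S]

def meanPayoff (m : S → ℝ) (w : S × B → ℝ) (b : B) : ℝ := ∑ s, m s * w (s, b)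

@[fun_prop]
lemma continuous_meanPayoff {X : Type*} [TopologicalSpace X] {w : X → S × B → ℝ}
    (hw : Continuous w) (m : S → ℝ) (b : B) : Continuous fun x => meanPayoff m (w x) b := by
  unfold meanPayoff; fun_prop

variable [Fintype B]

lemma Upay_add (u : S × B → ℝ) (μ : S × S → ℝ) (y z : S → B → ℝ) :
    Upay u μ (y + z) = Upay u μ y + Upay u μ z := by
  simp only [Upay, Pi.add_apply, add_mul, Finset.sum_add_distrib, mul_add]

lemma Upay_smul (u : S × B → ℝ) (μ : S × S → ℝ) (t : ℝ) (y : S → B → ℝ) :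
    Upay u μ (t • y) = t * Upay u μ y := by
  simp only [Upay, Pi.smul_apply, smul_eq_mul, Finset.mul_sum, mul_assoc, mul_left_comm]

lemma Upay_const {m : S → ℝ} {μ : S × S → ℝ} (hμ : ∀ s, ∑ a, μ (s, a) = m s)
    (u : S × B → ℝ) (g : B → ℝ) :
    Upay u μ (fun _ => g) = ∑ b, g b * meanPayoff m u b := by
  calc Upay u μ (fun _ => g) = ∑ s, m s * ∑ b, g b * u (s, b) := by
        simp only [Upay, ← Finset.sum_mul, hμ]
    _ = ∑ b, g b * meanPayoff m u b := by
        simp only [meanPayoff, Finset.mul_sum]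
        rw [Finset.sum_comm]
        exact Finset.sum_congr rfl fun _ _ => Finset.sum_congr rfl fun _ _ => by ring

lemma mu0_sum_right [DecidableEq S] (m : S → ℝ) (s : S) : ∑ a, mu0 m (s, a) = m s := by
  simp [mu0]

@[fun_prop]
lemma continuous_Upay {X : Type*} [TopologicalSpace X] {u : X → S × B → ℝ}
    {y : X → S → B → ℝ} (hu : Continuous u) (hy : Continuous y) (μ : S × S → ℝ) :
    Continuous fun x => Upay (u x) μ (y x) := by
  unfold Upay; fun_prop

variable [DecidableEq S]

def IsAdmissible (m : S → ℝ) (w1 w2 : S × B → ℝ) (y : S → B → ℝ) : Prop :=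
  IsStrategy y ∧ (∀ b, meanPayoff m w2 b ≤ Upay w2 (mu0 m) y) ∧
    ∀ μ, IsCopula m μ → Upay w1 μ y ≤ Upay w1 (mu0 m) y

def ConditionB (m : S → ℝ) (w1 w2 : S × B → ℝ) : Prop :=
  ∃ y, IsAdmissible m w1 w2 y ∧ ∃ s s', y s ≠ y s'

/-- The vanishing products say that every column `c ≠ b` of `d` has a zero; this is what
forces a state-independent `d` to be `0`, and, written as a product, it is a closed condition. -/
def IsAdmissibleDirection (m : S → ℝ) (w1 w2 : S × B → ℝ) (b : B) (d : S → B → ℝ) :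
    Prop :=
  (∀ c, meanPayoff m w2 c ≤ meanPayoff m w2 b) ∧
  (∀ s, ∑ c, d s c = 0) ∧
  (∀ c ≠ b, ∀ s, 0 ≤ d s c) ∧
  (∀ c ≠ b, ∏ s, d s c = 0) ∧
  (∀ μ, IsCopula m μ → Upay w1 μ d ≤ Upay w1 (mu0 m) d) ∧
  0 ≤ Upay w2 (mu0 m) d

namespace IsAdmissibleDirection

variable {m : S → ℝ} {w1 w2 : S × B → ℝ} {b : B} {d : S → B → ℝ}

lemma smul (hd : IsAdmissibleDirection m w1 w2 b d) {t : ℝ} (ht : 0 ≤ t) :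
    IsAdmissibleDirection m w1 w2 b (t • d) := by
  obtain ⟨hb, hrow, hnonneg, hprod, h1, h2⟩ := hd
  refine ⟨hb, fun s => ?_, fun c hc s => ?_, fun c hc => ?_, fun μ hμ => ?_, ?_⟩
  · simp [← Finset.mul_sum, hrow s]
  · simpa using mul_nonneg ht (hnonneg c hc s)
  · simp [Finset.prod_mul_distrib, hprod c hc]
  · rw [Upay_smul, Upay_smul]
    exact mul_le_mul_of_nonneg_left (h1 μ hμ) ht
  · rw [Upay_smul]
    exact mul_nonneg ht h2

lemma eq_zero_of_forall_eq (hd : IsAdmissibleDirection m w1 w2 b d)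
    (hconst : ∀ s s', d s = d s') : d = 0 := by
  obtain ⟨-, hrow, -, hprod, -⟩ := hd
  have hoff : ∀ c ≠ b, ∀ s, d s c = 0 := fun c hc s => by
    obtain ⟨s₀, -, hs₀⟩ := Finset.prod_eq_zero_iff.mp (hprod c hc)
    rw [hconst s s₀, hs₀]
  ext s c
  rcases eq_or_ne c b with rfl | hc
  · simpa [Finset.sum_eq_single c fun c' _ hc' => hoff c' hc' s] using hrow s
  · exact hoff c hc s

end IsAdmissibleDirection

lemma isClosed_setOf_isAdmissibleDirection (m : S → ℝ) (b : B) :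
    IsClosed {p : ((S × B → ℝ) × (S × B → ℝ)) × (S → B → ℝ) |
      IsAdmissibleDirection m p.1.1 p.1.2 b p.2} := by
  simp only [IsAdmissibleDirection, Set.ofPred_and, Set.ofPred_forall]
  repeat' first
    | refine .inter ?_ ?_
    | refine isClosed_iInter fun _ => ?_
    | refine isClosed_le ?_ ?_
    | refine isClosed_eq ?_ ?_
  all_goals fun_prop

section

variable {m : S → ℝ} {w1 w2 : S × B → ℝ}

lemma conditionB_of_isAdmissibleDirection {b : B} {d : S → B → ℝ}
    (hd : IsAdmissibleDirection m w1 w2 b d) (hnorm : ‖d‖ = 1) : ConditionB m w1 w2 := by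
  classical
  obtain ⟨s, s', hne⟩ : ∃ s s', d s ≠ d s' := by
    by_contra! h
    simp [hd.eq_zero_of_forall_eq h] at hnorm
  obtain ⟨hb, hrow, hnonneg, -, h1, h2⟩ := hd
  set δ : B → ℝ := Pi.single b 1
  have hUδ : ∀ {μ : S × S → ℝ}, (∀ s, ∑ a, μ (s, a) = m s) →
      ∀ w, Upay w μ (fun _ => δ) = meanPayoff m w b := fun hμ w => by
    simp [Upay_const hμ, δ, Pi.single_apply]
  have hstrat : IsStrategy ((fun _ => δ) + d) := by
    refine ⟨fun s c => ?_, fun s => ?_⟩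
    · rcases eq_or_ne c b with rfl | hc
      · have : |d s c| ≤ 1 := hnorm ▸ (norm_le_pi_norm (d s) c).trans (norm_le_pi_norm d s)
        simp only [Pi.add_apply, δ, Pi.single_eq_same]
        linarith [abs_le.mp this]
      · simpa [δ, hc] using hnonneg c hc s
    · simp [Finset.sum_add_distrib, hrow s, δ]
  refine ⟨(fun _ => δ) + d, ⟨hstrat, fun c => ?_, fun μ hμ => ?_⟩, s, s',
    by simpa using hne⟩
  · rw [Upay_add, hUδ (mu0_sum_right m)]
    linarith [hb c]
  · rw [Upay_add, Upay_add, hUδ hμ.2.2.1, hUδ (mu0_sum_right m)]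
    linarith [h1 μ hμ]

lemma exists_isAdmissibleDirection_of_conditionB (h : ConditionB m w1 w2) :
    ∃ b d, d ≠ 0 ∧ IsAdmissibleDirection m w1 w2 b d := by
  classical
  obtain ⟨y, ⟨⟨hy0, hy1⟩, h2, h1⟩, s₀, s₁, hne⟩ := h
  have : Nonempty S := ⟨s₀⟩
  have : Nonempty B := by
    by_contra hB
    rw [not_nonempty_iff] at hB
    simpa using hy1 s₀
  obtain ⟨b, hb⟩ := Finite.exists_max (meanPayoff m w2)
  -- `r c` is the mass that every state puts on `c`; moving it onto `b` costs player 2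
  -- nothing, as `b` maximises his mean payoff.
  set r : B → ℝ := fun c => ⨅ s, y s c
  set g : B → ℝ := Pi.single b (∑ c, r c - 1) - r
  have hr0 : ∀ c, 0 ≤ r c := fun c => le_ciInf fun s => hy0 s c
  have hry : ∀ s c, r c ≤ y s c := fun s c => ciInf_le (Finite.bddBelow_range _) s
  have hUg : ∀ {μ : S × S → ℝ}, (∀ s, ∑ a, μ (s, a) = m s) → ∀ w,
      Upay w μ (y + fun _ => g) = Upay w μ y + ∑ c, g c * meanPayoff m w c :=
    fun hμ w => by rw [Upay_add, Upay_const hμ]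
  refine ⟨b, y + fun _ => g, ?_, hb, fun s => ?_, fun c hc s => ?_, fun c hc => ?_,
    fun μ hμ => ?_, ?_⟩
  · intro h0
    have hyg : ∀ s, y s = -g := fun s => eq_neg_of_add_eq_zero_left (congrFun h0 s)
    exact hne ((hyg s₀).trans (hyg s₁).symm)
  · simp [Finset.sum_add_distrib, hy1 s, g, Finset.sum_sub_distrib]
  · simpa [g, hc] using hry s c
  · obtain ⟨s', hs'⟩ := exists_eq_ciInf_of_finite (f := fun s => y s c)
    exact Finset.prod_eq_zero (Finset.mem_univ s') (by simp [g, hc, hs', r])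
  · rw [hUg hμ.2.2.1, hUg (mu0_sum_right m)]
    linarith [h1 μ hμ]
  · have hg : ∑ c, g c * meanPayoff m w2 c =
        ∑ c, r c * (meanPayoff m w2 b - meanPayoff m w2 c) - meanPayoff m w2 b := by
      simp [g, sub_mul, Finset.sum_sub_distrib, mul_sub, Finset.sum_mul, Pi.single_apply]
      ring
    have hr : 0 ≤ ∑ c, r c * (meanPayoff m w2 b - meanPayoff m w2 c) :=
      Finset.sum_nonneg fun c _ => mul_nonneg (hr0 c) (sub_nonneg.2 (hb c))
    rw [hUg (mu0_sum_right m), hg]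
    linarith [h2 b]

lemma conditionB_iff :
    ConditionB m w1 w2 ↔
      ∃ b, ∃ d ∈ sphere (0 : S → B → ℝ) 1, IsAdmissibleDirection m w1 w2 b d := by
  refine ⟨fun h => ?_, fun ⟨b, d, hd1, hd⟩ =>
    conditionB_of_isAdmissibleDirection hd (mem_sphere_zero_iff_norm.mp hd1)⟩
  obtain ⟨b, d, hd0, hd⟩ := exists_isAdmissibleDirection_of_conditionB h
  have hnorm : ‖‖d‖⁻¹ • d‖ = 1 := by
    rw [norm_smul, norm_inv, norm_norm, inv_mul_cancel₀ (norm_ne_zero_iff.mpr hd0)]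
  exact ⟨b, ‖d‖⁻¹ • d, mem_sphere_zero_iff_norm.mpr hnorm, hd.smul (by positivity)⟩

end

lemma isClosed_setOf_conditionB (m : S → ℝ) :
    IsClosed {w : (S × B → ℝ) × (S × B → ℝ) | ConditionB m w.1 w.2} := by
  have : {w : (S × B → ℝ) × (S × B → ℝ) | ConditionB m w.1 w.2} =
      ⋃ b, Prod.fst '' {p : _ × sphere (0 : S → B → ℝ) 1 |
        IsAdmissibleDirection m p.1.1 p.1.2 b p.2} := by
    ext w
    simp [conditionB_iff]
  rw [this]
  exact isClosed_iUnion_of_finite fun b => isClosedMap_fst_of_compactSpace _ <|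
    (isClosed_setOf_isAdmissibleDirection m b).preimage
      (continuous_id.prodMap continuous_subtype_val)

end

/- The condition `U²(μ₀,y) ≥ v²`, where `v² = max_b Σ_s m(s)u²(s,b)`, is expressed as
the inequality against every action `b`. Condition B for the game `(w1, w2)` fails iff
every stationary strategy `y` with `U²(μ₀,y) ≥ v²` and `U¹(μ₀,y) ≥ U¹(μ,y)` for all
copulas `μ` is constant. -/
theorem stmt14_general {S B : Type*} [Fintype S] [DecidableEq S]
    [Fintype B]
    (m : S → ℝ)
    (u1 u2 : S × B → ℝ)
    (hfail : ∀ y : S → B → ℝ, IsStrategy y →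
      (∀ b : B, ∑ s, m s * u2 (s, b) ≤ Upay u2 (mu0 m) y) →
      (∀ μ : S × S → ℝ, IsCopula m μ → Upay u1 μ y ≤ Upay u1 (mu0 m) y) →
      ∀ s s' : S, y s = y s') :
    ∃ ε : ℝ, 0 < ε ∧
      ∀ u1' u2' : S × B → ℝ, ‖u1' - u1‖ < ε → ‖u2' - u2‖ < ε →
        ∀ y : S → B → ℝ, IsStrategy y →
          (∀ b : B, ∑ s, m s * u2' (s, b) ≤ Upay u2' (mu0 m) y) →
          (∀ μ : S × S → ℝ, IsCopula m μ → Upay u1' μ y ≤ Upay u1' (mu0 m) y) →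
          ∀ s s' : S, y s = y s' := by
  have hu : (u1, u2) ∉ {w : (S × B → ℝ) × (S × B → ℝ) | ConditionB m w.1 w.2} :=
    fun ⟨y, ⟨hy, h2, h1⟩, s, s', hne⟩ => hne (hfail y hy h2 h1 s s')
  obtain ⟨ε, hε, hball⟩ :=
    isOpen_iff.mp (isClosed_setOf_conditionB m).isOpen_compl (u1, u2) hu
  refine ⟨ε, hε, fun u1' u2' h1 h2 y hy hy2 hy1 s s' => ?_⟩
  by_contra hne
  have hmem : (u1', u2') ∈ ball (u1, u2) ε := by
    rw [mem_ball, Prod.dist_eq, dist_eq_norm, dist_eq_norm]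
    exact max_lt h1 h2
  exact hball hmem ⟨y, ⟨hy, hy2, hy1⟩, s, s', hne⟩

theorem stmt14 {S B : Type*} [Fintype S] [DecidableEq S] (hS : 1 < Fintype.card S)
    [Fintype B] [Nonempty B]
    (m : S → ℝ) (hm : ∀ s, 0 < m s) (hm1 : ∑ s, m s = 1)
    (u1 u2 : S × B → ℝ)
    (hfail : ∀ y : S → B → ℝ, IsStrategy y →
      (∀ b : B, ∑ s, m s * u2 (s, b) ≤ Upay u2 (mu0 m) y) →
      (∀ μ : S × S → ℝ, IsCopula m μ → Upay u1 μ y ≤ Upay u1 (mu0 m) y) →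
      ∀ s s' : S, y s = y s') :
    ∃ ε : ℝ, 0 < ε ∧
      ∀ u1' u2' : S × B → ℝ, ‖u1' - u1‖ < ε → ‖u2' - u2‖ < ε →
        ∀ y : S → B → ℝ, IsStrategy y →
          (∀ b : B, ∑ s, m s * u2' (s, b) ≤ Upay u2' (mu0 m) y) →
          (∀ μ : S × S → ℝ, IsCopula m μ → Upay u1' μ y ≤ Upay u1' (mu0 m) y) →
          ∀ s s' : S, y s = y s' :=
  stmt14_general m u1 u2 hfail
end

section
/- Let (σ,τ) be a Nash equilibrium of the one-shot information transmission game, and define the induced stationary strategy ỹ by ỹ(b|s) = Σ_{a∈S} σ(a|s)·τ(b|a). Then ỹ satisfies both equilibrium conditions of the dynamic characterization: (C1) U¹(μ₀,ỹ) ≥ U¹(μ,ỹ) for every μ ∈ M(m), and (C2) U²(μ₀,ỹ) ≥ v², i.e., the equilibrium payoff vector U(μ₀,ỹ) of the one-shot game belongs to the set E(M). -/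
/-- Player `i`'s expected payoff in the one-shot information transmission game, where the
sender plays `σ` and the receiver plays `τ`. -/
def oneShotPayoff {S B : Type*} [Fintype S] [Fintype B]
    (m : S → ℝ) (u : S × B → ℝ) (σ : S → S → ℝ) (τ : S → B → ℝ) : ℝ :=
  ∑ s, m s * ∑ a, σ s a * ∑ b, τ a b * u (s, b)

/-!
At the diagonal copula `μ₀` the payoff of `ỹ = σ ∘ τ` is the one-shot equilibrium payoff.
A general copula `μ` is the sender deviation "draw a fake state `a` with probability
`μ(s, a) / m(s)` and then play `σ(· | a)`", so (C1) is the sender's equilibrium condition.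
Ignoring the message and always playing `b` is a receiver deviation worth
`Σ_s m(s) u²(s, b)`, so (C2) is the receiver's equilibrium condition.
-/

def composeStrategy {S A B : Type*} [Fintype A] (σ : S → A → ℝ) (τ : A → B → ℝ) :
    S → B → ℝ :=
  fun s b => ∑ a, σ s a * τ a b

noncomputable def copulaConditional {S : Type*} (m : S → ℝ) (μ : S × S → ℝ) : S → S → ℝ :=
  fun s a => μ (s, a) / m s

section

variable {S A B : Type*}

theorem sum_composeStrategy_mul [Fintype A] [Fintype B] (σ : S → A → ℝ) (τ : A → B → ℝ) (f : B → ℝ) (s : S) :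
    ∑ b, composeStrategy σ τ s b * f b = ∑ a, σ s a * ∑ b, τ a b * f b := by
  simp only [composeStrategy, Finset.sum_mul, Finset.mul_sum, mul_assoc]
  exact Finset.sum_comm

theorem IsStrategy.composeStrategy [Fintype A] [Fintype B] {σ : S → A → ℝ} {τ : A → B → ℝ}
    (hσ : IsStrategy σ) (hτ : IsStrategy τ) : IsStrategy (composeStrategy σ τ) := by
  refine ⟨fun s b => Finset.sum_nonneg fun a _ => mul_nonneg (hσ.1 s a) (hτ.1 a b), fun s => ?_⟩
  simpa [hτ.2, hσ.2] using sum_composeStrategy_mul σ τ (fun _ => 1) s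

theorem isStrategy_pure [Fintype B] [DecidableEq B] (b : B) : IsStrategy fun _ : S => Pi.single b (1 : ℝ) := by
  refine ⟨fun _ b' => ?_, fun _ => by simp⟩
  simp only [Pi.single_apply]
  split_ifs <;> norm_num

theorem IsCopula.isStrategy_copulaConditional [Fintype S] {m : S → ℝ} {μ : S × S → ℝ}
    (hμ : IsCopula m μ) (hm : ∀ s, 0 < m s) : IsStrategy (copulaConditional m μ) := by
  refine ⟨fun s a => div_nonneg (hμ.1 _) (hm s).le, fun s => ?_⟩
  simp only [copulaConditional]
  rw [← Finset.sum_div, hμ.2.2.1 s, div_self (hm s).ne']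

end

section

variable {S B : Type*} [Fintype S] [Fintype B]

theorem oneShotPayoff_composeStrategy (m : S → ℝ) (u : S × B → ℝ) (ρ σ : S → S → ℝ)
    (τ : S → B → ℝ) :
    oneShotPayoff m u ρ (composeStrategy σ τ) = oneShotPayoff m u (composeStrategy ρ σ) τ := by
  simp only [oneShotPayoff, sum_composeStrategy_mul]

theorem oneShotPayoff_pure [DecidableEq B] (m : S → ℝ) (u : S × B → ℝ) {σ : S → S → ℝ}
    (hσ : ∀ s, ∑ a, σ s a = 1) (b : B) :
    oneShotPayoff m u σ (fun _ => Pi.single b 1) = ∑ s, m s * u (s, b) := by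
  simp [oneShotPayoff, Pi.single_apply, ← Finset.sum_mul, hσ]

theorem Upay_eq_oneShotPayoff_copulaConditional {m : S → ℝ} (hm : ∀ s, m s ≠ 0)
    (u : S × B → ℝ) (μ : S × S → ℝ) (y : S → B → ℝ) :
    Upay u μ y = oneShotPayoff m u (copulaConditional m μ) y := by
  refine Finset.sum_congr rfl fun s _ => ?_
  rw [Finset.mul_sum]
  refine Finset.sum_congr rfl fun a _ => ?_
  simp only [copulaConditional]
  rw [← mul_assoc, mul_div_cancel₀ _ (hm s)]

theorem Upay_mu0 [DecidableEq S] (m : S → ℝ) (u : S × B → ℝ) (y : S → B → ℝ) :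
    Upay u (mu0 m) y = ∑ s, m s * ∑ b, y s b * u (s, b) := by
  simp [Upay, mu0, ite_mul]

theorem Upay_mu0_composeStrategy [DecidableEq S] (m : S → ℝ) (u : S × B → ℝ)
    (σ : S → S → ℝ) (τ : S → B → ℝ) :
    Upay u (mu0 m) (composeStrategy σ τ) = oneShotPayoff m u σ τ := by
  simp only [Upay_mu0, oneShotPayoff, sum_composeStrategy_mul]

end

/- The condition `U²(μ₀,ỹ) ≥ v²`, where `v² = max_b Σ_s m(s)u²(s,b)`, is expressed as
the inequality against every action `b`. -/
theorem stmt15_general {S B : Type*} [Fintype S] [DecidableEq S]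
    [Fintype B]
    (m : S → ℝ) (hm : ∀ s, 0 < m s)
    (u1 u2 : S × B → ℝ)
    (σ : S → S → ℝ) (hσ : IsStrategy σ)
    (τ : S → B → ℝ)
    (hNE1 : ∀ σ' : S → S → ℝ, IsStrategy σ' →
      oneShotPayoff m u1 σ' τ ≤ oneShotPayoff m u1 σ τ)
    (hNE2 : ∀ τ' : S → B → ℝ, IsStrategy τ' →
      oneShotPayoff m u2 σ τ' ≤ oneShotPayoff m u2 σ τ)
    (ytil : S → B → ℝ) (hytil : ∀ s b, ytil s b = ∑ a, σ s a * τ a b) :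
    (∀ μ : S × S → ℝ, IsCopula m μ → Upay u1 μ ytil ≤ Upay u1 (mu0 m) ytil) ∧
    (∀ b : B, ∑ s, m s * u2 (s, b) ≤ Upay u2 (mu0 m) ytil) := by
  obtain rfl : ytil = composeStrategy σ τ := funext₂ hytil
  refine ⟨fun μ hμ => ?_, fun b => ?_⟩
  · rw [Upay_eq_oneShotPayoff_copulaConditional (fun s => (hm s).ne'),
      oneShotPayoff_composeStrategy, Upay_mu0_composeStrategy]
    exact hNE1 _ ((hμ.isStrategy_copulaConditional hm).composeStrategy hσ)
  · classical
    rw [Upay_mu0_composeStrategy, ← oneShotPayoff_pure m u2 hσ.2 b]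
    exact hNE2 _ (isStrategy_pure b)

theorem stmt15 {S B : Type*} [Fintype S] [DecidableEq S] [Nonempty S]
    [Fintype B] [Nonempty B]
    (m : S → ℝ) (hm : ∀ s, 0 < m s) (hm1 : ∑ s, m s = 1)
    (u1 u2 : S × B → ℝ)
    (σ : S → S → ℝ) (hσ : IsStrategy σ)
    (τ : S → B → ℝ) (hτ : IsStrategy τ)
    (hNE1 : ∀ σ' : S → S → ℝ, IsStrategy σ' →
      oneShotPayoff m u1 σ' τ ≤ oneShotPayoff m u1 σ τ)
    (hNE2 : ∀ τ' : S → B → ℝ, IsStrategy τ' →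
      oneShotPayoff m u2 σ τ' ≤ oneShotPayoff m u2 σ τ)
    (ytil : S → B → ℝ) (hytil : ∀ s b, ytil s b = ∑ a, σ s a * τ a b) :
    (∀ μ : S × S → ℝ, IsCopula m μ → Upay u1 μ ytil ≤ Upay u1 (mu0 m) ytil) ∧
    (∀ b : B, ∑ s, m s * u2 (s, b) ≤ Upay u2 (mu0 m) ytil) :=
  stmt15_general m hm u1 u2 σ hσ τ hNE1 hNE2 ytil hytil
end
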